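/- Let φ(x) := cot((π/2)·(x/√6 + 1/2)). For every integer N ≥ 3 there exists an odd polynomial P with real coefficients such that for every real x with |x| ≤ 1/2 one has |φ(x) − Σ_{m=0}^{N+1} (φ^{(2m)}(0)/(2m)!)·x^{2m} − P(x)| ≤ 2.3·(2/3)^{N+2}·x^{2N+4}. -/

import Mathlib

open Real Finset

/-- `φ(x) = cot((π/2)(x/√6 + 1/2))`. -/
noncomputable def phi (x : ℝ) : ℝ :=
  Real.cot (π / 2 * (x / Real.sqrt 6 + 1 / 2))

noncomputable section Stmt8Proof
open scoped NNReal ENNReal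

lemma s6_sq : Real.sqrt 6 ^ 2 = 6 := Real.sq_sqrt (by norm_num)
lemma s6_gt : (2.449 : ℝ) < Real.sqrt 6 := by
  have : (2.449 : ℝ) = Real.sqrt (2.449 ^ 2) := (Real.sqrt_sq (by norm_num)).symm
  rw [this]; apply Real.sqrt_lt_sqrt <;> norm_num
lemma s6_lt : Real.sqrt 6 < 2.4495 := by
  have : (2.4495 : ℝ) = Real.sqrt (2.4495 ^ 2) := (Real.sqrt_sq (by norm_num)).symm
  rw [this]; apply Real.sqrt_lt_sqrt <;> norm_num
lemma s6_pos : (0:ℝ) < Real.sqrt 6 := by linarith [s6_gt]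
lemma s6_ne : (Real.sqrt 6 : ℂ) ≠ 0 := Complex.ofReal_ne_zero.mpr (ne_of_gt s6_pos)
lemma pi_ne : (π : ℂ) ≠ 0 := Complex.ofReal_ne_zero.mpr (ne_of_gt Real.pi_pos)

/-- complex sin approximation -/
lemma csin_approx (w : ℂ) (hw : ‖w‖ ≤ 1) :
    ‖Complex.sin w - w‖ ≤ ‖w‖ ^ 3 := by
  have h1 : ‖w * Complex.I‖ ≤ 1 := by simpa using hw
  have h2 : ‖-(w * Complex.I)‖ ≤ 1 := by simpa using hw
  have e1 := Complex.exp_bound h1 (n := 3) (by norm_num)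
  have e2 := Complex.exp_bound h2 (n := 3) (by norm_num)
  have hsum1 : ∑ i ∈ range 3, (w * Complex.I) ^ i / i.factorial
      = 1 + w * Complex.I - w ^ 2 / 2 := by
    simp [Finset.sum_range_succ, Nat.factorial]
    ring_nf
    simp [Complex.I_sq]
    ring
  have hsum2 : ∑ i ∈ range 3, (-(w * Complex.I)) ^ i / i.factorial
      = 1 - w * Complex.I - w ^ 2 / 2 := by
    simp [Finset.sum_range_succ, Nat.factorial]
    ring_nf
    simp [Complex.I_sq]
    ring
  rw [hsum1] at e1
  rw [hsum2] at e2
  have hw3 : (0:ℝ) ≤ ‖w‖ ^ 3 := by positivity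
  have f1 : ‖Complex.exp (w * Complex.I) - (1 + w * Complex.I - w ^ 2 / 2)‖
      ≤ ‖w‖ ^ 3 := by
    refine e1.trans ?_
    simp only [norm_mul, Complex.norm_I, mul_one, norm_neg, Nat.factorial]
    nlinarith
  have f2 : ‖Complex.exp (-(w * Complex.I)) - (1 - w * Complex.I - w ^ 2 / 2)‖
      ≤ ‖w‖ ^ 3 := by
    refine e2.trans ?_
    simp only [norm_mul, Complex.norm_I, mul_one, norm_neg, Nat.factorial]
    nlinarith
  have hsin : Complex.sin w - w
      = ((Complex.exp (-(w * Complex.I)) - (1 - w * Complex.I - w ^ 2 / 2))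
        - (Complex.exp (w * Complex.I) - (1 + w * Complex.I - w ^ 2 / 2))) * Complex.I / 2 := by
    rw [Complex.sin]
    ring_nf
    simp [Complex.I_sq]
  rw [hsin]
  rw [norm_div, norm_mul]
  simp only [Complex.norm_I, Complex.norm_two, mul_one]
  have := (norm_sub_le (Complex.exp (-(w * Complex.I)) - (1 - w * Complex.I - w ^ 2 / 2))
    (Complex.exp (w * Complex.I) - (1 + w * Complex.I - w ^ 2 / 2)))
  linarith

lemma ccos_approx (w : ℂ) (hw : ‖w‖ ≤ 1) :
    ‖Complex.cos w - 1‖ ≤ ‖w‖ ^ 2 := by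
  have h1 : ‖w * Complex.I‖ ≤ 1 := by simpa using hw
  have h2 : ‖-(w * Complex.I)‖ ≤ 1 := by simpa using hw
  have e1 := Complex.exp_bound h1 (n := 2) (by norm_num)
  have e2 := Complex.exp_bound h2 (n := 2) (by norm_num)
  have hsum1 : ∑ i ∈ range 2, (w * Complex.I) ^ i / i.factorial = 1 + w * Complex.I := by
    simp [Finset.sum_range_succ]
  have hsum2 : ∑ i ∈ range 2, (-(w * Complex.I)) ^ i / i.factorial = 1 - w * Complex.I := by
    simp [Finset.sum_range_succ]; ring
  rw [hsum1] at e1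
  rw [hsum2] at e2
  have hw2 : (0:ℝ) ≤ ‖w‖ ^ 2 := by positivity
  have f1 : ‖Complex.exp (w * Complex.I) - (1 + w * Complex.I)‖
      ≤ ‖w‖ ^ 2 := by
    refine e1.trans ?_
    simp only [norm_mul, Complex.norm_I, mul_one, norm_neg, Nat.factorial]
    nlinarith
  have f2 : ‖Complex.exp (-(w * Complex.I)) - (1 - w * Complex.I)‖
      ≤ ‖w‖ ^ 2 := by
    refine e2.trans ?_
    simp only [norm_mul, Complex.norm_I, mul_one, norm_neg, Nat.factorial]
    nlinarith
  have hcos : Complex.cos w - 1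
      = ((Complex.exp (w * Complex.I) - (1 + w * Complex.I))
        + (Complex.exp (-(w * Complex.I)) - (1 - w * Complex.I))) / 2 := by
    rw [Complex.cos]
    ring_nf
  rw [hcos]
  rw [norm_div]
  simp only [Complex.norm_two]
  have := (norm_add_le (Complex.exp (w * Complex.I) - (1 + w * Complex.I))
    (Complex.exp (-(w * Complex.I)) - (1 - w * Complex.I)))
  linarith


lemma abs_sin_sq (w : ℂ) :
    ‖Complex.sin w‖ ^ 2 = Real.sin w.re ^ 2 + Real.sinh w.im ^ 2 := by
  have hw : Complex.sin w = (Real.sin w.re * Real.cosh w.im : ℝ)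
      + (Real.cos w.re * Real.sinh w.im : ℝ) * Complex.I := by
    conv_lhs => rw [← Complex.re_add_im w]
    rw [Complex.sin_add, Complex.cos_mul_I, Complex.sin_mul_I]
    push_cast
    ring
  rw [hw, Complex.sq_norm, Complex.normSq_add_mul_I]
  have h1 := Real.cosh_sq w.im
  have h2 := Real.sin_sq_add_cos_sq w.re
  nlinarith

lemma sin_lower (w : ℂ) {d : ℝ} (hd : 0 ≤ d)
    (h : ∀ k : ℤ, d ≤ ‖w - (k : ℂ) * (π : ℂ)‖) :
    2 / π * d ≤ ‖Complex.sin w‖ := by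
  have hπ := Real.pi_pos
  set x := w.re with hx
  set y := w.im with hy
  set k := round (x / π) with hk
  set dx := x - k * π with hdxdef
  have hdx : |dx| ≤ π / 2 := by
    have h0 := abs_sub_round (x / π)
    have heq : dx = (x / π - k) * π := by rw [hdxdef]; field_simp
    rw [heq, abs_mul, abs_of_pos hπ]
    nlinarith [abs_nonneg (x / π - (k:ℝ))]
  have hsin2 : Real.sin x ^ 2 = Real.sin dx ^ 2 := by
    have hxe : x = dx + k * π := by rw [hdxdef]; ring
    rw [hxe, Real.sin_add_int_mul_pi, mul_pow]
    have habs : (-1 : ℝ) ^ k = 1 ∨ (-1 : ℝ) ^ k = -1 :=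
      (Int.even_or_odd k).imp (fun h => h.neg_one_zpow) (fun h => h.neg_one_zpow)
    rcases habs with habs | habs <;> rw [habs] <;> ring
  have hsd : 2 / π * |dx| ≤ |Real.sin dx| := by
    have h2 := Real.mul_le_sin (abs_nonneg dx) hdx
    have heq : Real.sin |dx| = |Real.sin dx| := by
      rcases le_or_gt 0 dx with hs | hs
      · rw [abs_of_nonneg hs, abs_of_nonneg
          (Real.sin_nonneg_of_nonneg_of_le_pi hs (by rw [abs_of_nonneg hs] at hdx; linarith))]
      · have h4 : Real.sin dx ≤ 0 := by
          have h5 : 0 ≤ Real.sin (-dx) :=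
            Real.sin_nonneg_of_nonneg_of_le_pi (by linarith)
              (by rw [abs_of_neg hs] at hdx; linarith)
          rw [Real.sin_neg] at h5; linarith
        rw [abs_of_neg hs, Real.sin_neg, abs_of_nonpos h4]
    linarith [heq ▸ h2]
  have him : |y| ≤ |Real.sinh y| := by
    rcases le_or_gt 0 y with hs | hs
    · have := Real.self_le_sinh_iff.mpr hs
      rw [abs_of_nonneg hs, abs_of_nonneg (by linarith)]; exact this
    · have h5 : -y ≤ Real.sinh (-y) := Real.self_le_sinh_iff.mpr (by linarith)
      rw [Real.sinh_neg] at h5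
      rw [abs_of_neg hs, abs_of_nonpos (by linarith)]
      linarith
  have hB2 : ‖w - (k : ℂ) * (π : ℂ)‖ ^ 2 = dx ^ 2 + y ^ 2 := by
    rw [Complex.sq_norm, Complex.normSq_apply]
    have hre : (w - (k : ℂ) * (π : ℂ)).re = dx := by
      simp [Complex.sub_re, Complex.mul_re, hdxdef, hx]
    have him2 : (w - (k : ℂ) * (π : ℂ)).im = y := by
      simp [Complex.sub_im, Complex.mul_im, hy]
    rw [hre, him2]; ring
  have hA2 := abs_sin_sq w
  have hBd := h k
  have h2pi : 2 / π ≤ 1 := by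
    rw [div_le_one hπ]; linarith [Real.pi_gt_three]
  have h2pi0 : 0 < 2 / π := by positivity
  have hA0 := norm_nonneg (Complex.sin w)
  have hB0 := norm_nonneg (w - (k : ℂ) * (π : ℂ))
  rw [← hx, ← hy] at hA2
  have hdd : |dx| * |dx| = dx ^ 2 := by rw [abs_mul_abs_self]; ring
  have hyy : |y| * |y| = y ^ 2 := by rw [abs_mul_abs_self]; ring
  have hss : |Real.sin dx| * |Real.sin dx| = Real.sin dx ^ 2 := by rw [abs_mul_abs_self]; ring
  have hhh : |Real.sinh y| * |Real.sinh y| = Real.sinh y ^ 2 := by rw [abs_mul_abs_self]; ring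
  have e1 : (2 / π) ^ 2 * dx ^ 2 ≤ Real.sin dx ^ 2 := by
    have h6 := mul_le_mul hsd hsd (by positivity) (abs_nonneg _)
    calc (2 / π) ^ 2 * dx ^ 2 = 2 / π * |dx| * (2 / π * |dx|) := by rw [← hdd]; ring
      _ ≤ |Real.sin dx| * |Real.sin dx| := h6
      _ = Real.sin dx ^ 2 := hss
  have e2 : y ^ 2 ≤ Real.sinh y ^ 2 := by
    have h6 := mul_le_mul him him (abs_nonneg y) (abs_nonneg _)
    calc y ^ 2 = |y| * |y| := hyy.symm
      _ ≤ |Real.sinh y| * |Real.sinh y| := h6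
      _ = Real.sinh y ^ 2 := hhh
  have e3 : d ^ 2 ≤ dx ^ 2 + y ^ 2 := by
    rw [← hB2]
    calc d ^ 2 = d * d := sq d
      _ ≤ ‖w - (k : ℂ) * (π : ℂ)‖ * ‖w - (k : ℂ) * (π : ℂ)‖ :=
          mul_le_mul hBd hBd hd hB0
      _ = ‖w - (k : ℂ) * (π : ℂ)‖ ^ 2 := (sq _).symm
  have c1 : (2 / π) ^ 2 ≤ 1 := by nlinarith
  have e4 : (2 / π * d) ^ 2 ≤ ‖Complex.sin w‖ ^ 2 := by
    rw [hA2, hsin2]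
    have h7 := mul_le_mul_of_nonneg_left e3 (by positivity : (0:ℝ) ≤ (2 / π) ^ 2)
    have h8 := mul_le_mul_of_nonneg_right c1 (sq_nonneg y)
    calc (2 / π * d) ^ 2 = (2 / π) ^ 2 * d ^ 2 := by ring
      _ ≤ (2 / π) ^ 2 * (dx ^ 2 + y ^ 2) := h7
      _ = (2 / π) ^ 2 * dx ^ 2 + (2 / π) ^ 2 * y ^ 2 := by ring
      _ ≤ Real.sin dx ^ 2 + Real.sinh y ^ 2 := by
          have h9 : (2 / π) ^ 2 * y ^ 2 ≤ y ^ 2 := by linarith [h8]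
          linarith [e1, e2]
  have h8 : 0 ≤ 2 / π * d := by positivity
  have h9 := Real.sqrt_le_sqrt e4
  rwa [Real.sqrt_sq h8, Real.sqrt_sq hA0] at h9
def wz (z : ℂ) : ℂ := (π : ℂ) / 2 * (z / (Real.sqrt 6 : ℂ) + 1 / 2)
def Fc : ℂ → ℂ := fun z => Complex.cot (wz z)
def z₀ : ℂ := -((Real.sqrt 6 : ℂ) / 2)
def pc : ℂ → ℂ := fun z => ((2 * Real.sqrt 6 / π : ℝ) : ℂ) / (z + (Real.sqrt 6 : ℂ) / 2)
def Gc : ℂ → ℂ := fun z => Fc z - pc z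

lemma wz_eq (z : ℂ) : wz z = (π : ℂ) / (2 * (Real.sqrt 6 : ℂ)) * (z - z₀) := by
  rw [wz, z₀]; field_simp; ring

lemma wz_affine (z : ℂ) : wz z = ((π / (2 * Real.sqrt 6) : ℝ) : ℂ) * z + ((π / 4 : ℝ) : ℂ) := by
  rw [wz]; push_cast; field_simp; ring

lemma sub_z0_ne {z : ℂ} (hz0 : z ≠ z₀) : z + (Real.sqrt 6 : ℂ) / 2 ≠ 0 := by
  intro h; apply hz0; rw [z₀]; linear_combination h

lemma wz_ne {z : ℂ} (hz0 : z ≠ z₀) : wz z ≠ 0 := by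
  rw [wz_eq]
  apply mul_ne_zero (div_ne_zero pi_ne (by simp [s6_ne]))
  rw [z₀, sub_neg_eq_add]; exact sub_z0_ne hz0

lemma sin_wz_ne {z : ℂ} (hz : ‖z‖ ≤ 5/2) (hz0 : z ≠ z₀) :
    Complex.sin (wz z) ≠ 0 := by
  intro h
  rw [Complex.sin_eq_zero_iff] at h
  obtain ⟨k, hk⟩ := h
  rw [wz_eq] at hk
  have hne : (π : ℂ) / (2 * (Real.sqrt 6 : ℂ)) ≠ 0 :=
    div_ne_zero pi_ne (by simp [s6_ne])
  have hzz : z - z₀ = 2 * (Real.sqrt 6 : ℂ) * k := by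
    have hc : ((k:ℂ) * (π:ℂ) : ℂ) = (π : ℂ) / (2 * (Real.sqrt 6 : ℂ)) * (2 * (Real.sqrt 6:ℂ) * k) := by
      field_simp
    rw [hc] at hk
    exact mul_left_cancel₀ hne hk
  rcases eq_or_ne k 0 with rfl | hk0
  · simp at hzz; exact hz0 (by linear_combination hzz)
  · have hze : z = ((Real.sqrt 6 * (2 * k - 1/2) : ℝ) : ℂ) := by
      push_cast; rw [z₀] at hzz; linear_combination hzz
    have habs : ‖z‖ = |Real.sqrt 6 * (2 * k - 1/2)| := by
      rw [hze, Complex.norm_real, Real.norm_eq_abs]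
    have hk1 : (1:ℝ) ≤ |(k:ℝ)| := by
      rw [← Int.cast_abs]; exact_mod_cast Int.one_le_abs hk0
    have : (3/2 : ℝ) ≤ |2 * (k:ℝ) - 1/2| := by
      rcases abs_cases (k:ℝ) with ⟨h1, h2⟩ | ⟨h1, h2⟩ <;> rcases abs_cases (2*(k:ℝ) - 1/2) with ⟨h3,h4⟩|⟨h3,h4⟩ <;> linarith
    rw [abs_mul, abs_of_pos s6_pos] at habs
    nlinarith [s6_gt, habs, hz, abs_nonneg (2*(k:ℝ) - 1/2)]

lemma wz_diff (z : ℂ) : DifferentiableAt ℂ wz z := by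
  unfold wz
  apply DifferentiableAt.mul (differentiableAt_const _)
  exact DifferentiableAt.add ((differentiableAt_id).div_const _) (differentiableAt_const _)

lemma Fc_diffAt {z : ℂ} (h : Complex.sin (wz z) ≠ 0) : DifferentiableAt ℂ Fc z := by
  have : Fc = fun z => Complex.cos (wz z) / Complex.sin (wz z) := by
    funext t; rw [Fc, Complex.cot_eq_cos_div_sin]
  rw [this]
  exact ((Complex.differentiable_cos.differentiableAt.comp z (wz_diff z)).div
    ((Complex.differentiable_sin.differentiableAt.comp z (wz_diff z))) h)

lemma pc_diffAt {z : ℂ} (hz0 : z ≠ z₀) : DifferentiableAt ℂ pc z := by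
  apply DifferentiableAt.div (differentiableAt_const _)
  · exact (differentiableAt_id).add (differentiableAt_const _)
  · exact sub_z0_ne hz0

lemma Gc_diffAt {z : ℂ} (hz : ‖z‖ ≤ 5/2) (hz0 : z ≠ z₀) :
    DifferentiableAt ℂ Gc z :=
  (Fc_diffAt (sin_wz_ne hz hz0)).sub (pc_diffAt hz0)

lemma Gc_z0 : Gc z₀ = 0 := by
  have h1 : wz z₀ = 0 := by rw [wz, z₀]; field_simp; ring
  have h2 : Fc z₀ = 0 := by
    rw [Fc, h1, Complex.cot_eq_cos_div_sin, Complex.sin_zero, div_zero]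
  have h3 : pc z₀ = 0 := by
    have h4 : z₀ + (Real.sqrt 6 : ℂ) / 2 = 0 := by rw [z₀]; ring
    show ((2 * Real.sqrt 6 / π : ℝ) : ℂ) / (z₀ + (Real.sqrt 6 : ℂ) / 2) = 0
    rw [h4, div_zero]
  rw [Gc]; rw [h2, h3, sub_zero]

lemma abs_z0 : ‖z₀‖ = Real.sqrt 6 / 2 := by
  rw [z₀]
  rw [norm_neg, norm_div, Complex.norm_real, Real.norm_eq_abs, Complex.norm_two,
    abs_of_pos s6_pos]

lemma pc_eq_inv_wz {z : ℂ} (hz0 : z ≠ z₀) : pc z = 1 / wz z := by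
  rw [pc, wz_eq]
  have h1 : z - z₀ ≠ 0 := sub_ne_zero.mpr hz0
  rw [z₀] at h1 ⊢
  rw [sub_neg_eq_add] at h1 ⊢
  push_cast
  field_simp

lemma Gc_cont : ContinuousAt Gc z₀ := by
  have key : Filter.Tendsto Gc (nhds z₀) (nhds 0) := by
    apply squeeze_zero_norm' (a := fun z => 3 * ‖z - z₀‖)
    · filter_upwards [Metric.ball_mem_nhds z₀ (by norm_num : (0:ℝ) < 1/2)] with z hz
      have hd : ‖z - z₀‖ < 1/2 := by
        rw [← Complex.dist_eq]; exact Metric.mem_ball.mp hz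
      rcases eq_or_ne z z₀ with rfl | hne
      · simp [Gc_z0]
      · set w := wz z with hwdef
        have haw : ‖w‖ ≤ ‖z - z₀‖ := by
          rw [hwdef, wz_eq, norm_mul, norm_div]
          have h1 : ‖(π:ℂ)‖ = π := by
            rw [Complex.norm_real, Real.norm_eq_abs, abs_of_pos Real.pi_pos]
          have h2 : ‖2 * (Real.sqrt 6 : ℂ)‖ = 2 * Real.sqrt 6 := by
            rw [norm_mul, Complex.norm_two, Complex.norm_real, Real.norm_eq_abs, abs_of_pos s6_pos]
          rw [h1, h2]
          have h3 : π / (2 * Real.sqrt 6) ≤ 1 := by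
            rw [div_le_one (by positivity)]
            nlinarith [Real.pi_lt_d2, s6_gt]
          exact mul_le_of_le_one_left (norm_nonneg _) h3
        have hw1 : ‖w‖ < 1/2 := lt_of_le_of_lt haw hd
        have hw0 : w ≠ 0 := wz_ne hne
        have hwpos : 0 < ‖w‖ := norm_pos_iff.mpr hw0
        have h1 := csin_approx w (by linarith)
        have h2 : ‖w‖ - ‖Complex.sin w - w‖
            ≤ ‖Complex.sin w‖ := by
          have h3 : ‖w‖ = ‖Complex.sin w - (Complex.sin w - w)‖ := by
            congr 1; ring
          have h4 := norm_sub_le (Complex.sin w) (Complex.sin w - w)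
          linarith [h3 ▸ h4]
        have hcube : ‖w‖ ^ 3 ≤ 1/4 * ‖w‖ := by
          have hsq : ‖w‖ ^ 2 ≤ 1/4 := by nlinarith
          nlinarith [mul_le_mul_of_nonneg_right hsq (le_of_lt hwpos)]
        have hsin : 3/4 * ‖w‖ ≤ ‖Complex.sin w‖ := by nlinarith
        have hsne : Complex.sin w ≠ 0 := by
          intro h; rw [h] at hsin; simp at hsin; nlinarith
        have hGeq : Gc z = (w * Complex.cos w - Complex.sin w) / (w * Complex.sin w) := by
          show Fc z - pc z = _
          rw [pc_eq_inv_wz hne, Fc, ← hwdef, Complex.cot_eq_cos_div_sin]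
          field_simp
        have hnum : ‖w * Complex.cos w - Complex.sin w‖
            ≤ 2 * ‖w‖ ^ 3 := by
          have he : w * Complex.cos w - Complex.sin w
              = w * (Complex.cos w - 1) - (Complex.sin w - w) := by ring
          rw [he]
          have h5 := norm_sub_le (w * (Complex.cos w - 1)) (Complex.sin w - w)
          rw [norm_mul] at h5
          have h6 := ccos_approx w (by linarith)
          nlinarith [norm_nonneg (Complex.cos w - 1)]
        rw [hGeq, norm_div, norm_mul]
        have hden : 0 < ‖w‖ * ‖Complex.sin w‖ := by
          apply mul_pos hwpos; nlinarith
        rw [div_le_iff₀ hden]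
        have hD0 : 0 ≤ ‖z - z₀‖ := norm_nonneg _
        have p1 : ‖w‖ * (‖w‖ * ‖Complex.sin w‖)
            ≤ ‖z - z₀‖ * (‖w‖ * ‖Complex.sin w‖) :=
          mul_le_mul_of_nonneg_right haw (le_of_lt hden)
        nlinarith [mul_le_mul_of_nonneg_left hsin (le_of_lt hwpos)]
    · have hcont : Continuous (fun z : ℂ => 3 * ‖z - z₀‖) :=
        continuous_const.mul (continuous_norm.comp (continuous_id.sub continuous_const))
      have := hcont.tendsto z₀
      simpa using this
  rw [ContinuousAt, Gc_z0]
  exact key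

lemma Gc_diffOn : DifferentiableOn ℂ Gc (Metric.closedBall 0 (49/20)) := by
  intro z hz
  apply DifferentiableAt.differentiableWithinAt
  have hza : ‖z‖ ≤ 49/20 := by
    have := Metric.mem_closedBall.mp hz
    rwa [Complex.dist_eq, sub_zero] at this
  rcases eq_or_ne z z₀ with rfl | hne
  · apply AnalyticAt.differentiableAt
    apply Complex.analyticAt_of_differentiable_on_punctured_nhds_of_continuousAt _ Gc_cont
    filter_upwards [self_mem_nhdsWithin,
      eventually_nhdsWithin_of_eventually_nhds
        (Metric.ball_mem_nhds z₀ (by norm_num : (0:ℝ) < 1))] with t ht hball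
    have ht' : t ≠ z₀ := ht
    apply Gc_diffAt _ ht'
    have h1 : ‖t - z₀‖ < 1 := by
      rw [← Complex.dist_eq]; exact Metric.mem_ball.mp hball
    have h2 : ‖t‖ ≤ ‖t - z₀‖ + ‖z₀‖ := by
      have h3 := norm_add_le (t - z₀) z₀
      simpa using h3
    rw [abs_z0] at h2
    nlinarith [s6_lt]
  · exact Gc_diffAt (by linarith : ‖z‖ ≤ 5/2) hne

lemma abs_add_ge₁ (u v : ℂ) : ‖u‖ - ‖v‖ ≤ ‖u + v‖ := by
  have := norm_sub_norm_le u (-v)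
  simpa [sub_neg_eq_add] using this

lemma abs_add_ge₂ (u v : ℂ) : ‖v‖ - ‖u‖ ≤ ‖u + v‖ := by
  have := abs_add_ge₁ v u; rwa [add_comm] at this

set_option maxHeartbeats 1000000 in
lemma Gc_bound {z : ℂ} (hz : ‖z‖ = 49/20) : ‖Gc z‖ ≤ 17 := by
  have hπl : 3.141592 < π := Real.pi_gt_d6
  have hπu : π < 3.141593 := Real.pi_lt_d6
  have h6l := s6_gt
  have h6u := s6_lt
  set a : ℝ := π / (2 * Real.sqrt 6) with ha
  have ha0 : 0 < a := by positivity
  have haz : ‖((a : ℝ) : ℂ) * z‖ = a * (49/20) := by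
    rw [norm_mul, Complex.norm_real, Real.norm_eq_abs, abs_of_pos ha0, hz]
  have haq : a * (49/20) = 49 * π / (40 * Real.sqrt 6) := by rw [ha]; ring
  have hal : 1.571 ≤ a * (49/20) := by
    rw [haq, le_div_iff₀ (by positivity)]; nlinarith
  have hau : a * (49/20) ≤ 1.5717 := by
    rw [haq, div_le_iff₀ (by positivity)]; nlinarith
  set w := wz z with hwdef
  have hwim : |w.im| ≤ 1.5717 := by
    have h1 : w.im = a * z.im := by
      rw [hwdef, wz_affine]
      rw [Complex.add_im, Complex.im_ofReal_mul, Complex.ofReal_im, add_zero, ha]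
    rw [h1, abs_mul, abs_of_pos ha0]
    have h2 : |z.im| ≤ 49/20 := hz ▸ Complex.abs_im_le_norm z
    nlinarith [abs_nonneg z.im]
  have hexp2 : Real.exp 2 ≤ 7.39 := by
    have h1 : Real.exp 2 = Real.exp 1 * Real.exp 1 := by
      rw [← Real.exp_add]; norm_num
    nlinarith [Real.exp_one_lt_d9, Real.exp_pos 1]
  have hcos : ‖Complex.cos w‖ ≤ 7.39 := by
    rw [Complex.cos]
    have h1 := norm_add_le (Complex.exp (w * Complex.I)) (Complex.exp (-w * Complex.I))
    have h2 : ‖Complex.exp (w * Complex.I)‖ ≤ Real.exp 2 := by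
      rw [Complex.norm_exp, Complex.mul_I_re]
      apply Real.exp_le_exp.mpr
      cases abs_le.mp hwim; linarith
    have h3 : ‖Complex.exp (-w * Complex.I)‖ ≤ Real.exp 2 := by
      rw [Complex.norm_exp]
      have : (-w * Complex.I).re = w.im := by simp [Complex.mul_I_re]
      rw [this]
      apply Real.exp_le_exp.mpr
      cases abs_le.mp hwim; linarith
    rw [norm_div, Complex.norm_two]
    linarith
  have hdistk : ∀ k : ℤ, (0.78 : ℝ) ≤ ‖w - (k : ℂ) * (π : ℂ)‖ := by
    intro k
    have hwk : w - (k : ℂ) * (π : ℂ) = ((a : ℝ) : ℂ) * z + (((π/4 - k*π : ℝ)) : ℂ) := by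
      rw [hwdef, wz_affine, ha]; push_cast; ring
    have t1 := abs_add_ge₁ (((a : ℝ) : ℂ) * z) (((π/4 - k*π : ℝ)) : ℂ)
    have t2 := abs_add_ge₂ (((a : ℝ) : ℂ) * z) (((π/4 - k*π : ℝ)) : ℂ)
    rw [← hwk, haz, Complex.norm_real, Real.norm_eq_abs] at t1 t2
    have hcases : k ≤ -1 ∨ k = 0 ∨ k = 1 ∨ 2 ≤ k := by omega
    rcases hcases with hk | rfl | rfl | hk
    · have hkr : (k : ℝ) ≤ -1 := by exact_mod_cast hk
      have h7 : 5 * π / 4 ≤ |π/4 - k*π| := by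
        rw [abs_of_pos (by nlinarith)]; nlinarith
      linarith
    · have h7 : |π/4 - (0:ℤ)*π| ≤ 0.7854 := by
        push_cast
        rw [zero_mul, sub_zero, abs_of_pos (by linarith)]; linarith
      push_cast at h7 t1 ⊢
      linarith
    · have h7 : (2.356 : ℝ) ≤ |π/4 - (1:ℤ)*π| := by
        push_cast
        rw [one_mul, abs_of_neg (by linarith)]; linarith
      push_cast at h7 t2 ⊢
      linarith
    · have hkr : (2 : ℝ) ≤ (k : ℝ) := by exact_mod_cast hk
      have h7 : 5 * π / 4 ≤ |π/4 - k*π| := by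
        rw [abs_of_neg (by nlinarith)]; nlinarith
      linarith
  have hsinlb : (0.49 : ℝ) ≤ ‖Complex.sin w‖ := by
    have h1 := sin_lower w (by norm_num : (0:ℝ) ≤ 0.78) hdistk
    have h2 : (0.49 : ℝ) ≤ 2 / π * 0.78 := by
      rw [div_mul_eq_mul_div, le_div_iff₀ Real.pi_pos]; nlinarith
    linarith
  have hcot : ‖Fc z‖ ≤ 15.1 := by
    rw [Fc, ← hwdef, Complex.cot_eq_cos_div_sin, norm_div]
    rw [div_le_iff₀ (by linarith : (0:ℝ) < ‖Complex.sin w‖)]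
    nlinarith
  have hpc : ‖pc z‖ ≤ 1.28 := by
    rw [pc]
    have hnum : ‖(((2 * Real.sqrt 6 / π : ℝ)) : ℂ)‖ ≤ 1.56 := by
      rw [Complex.norm_real, Real.norm_eq_abs, abs_of_pos (by positivity)]
      rw [div_le_iff₀ Real.pi_pos]; nlinarith
    have hden : (1.225 : ℝ) ≤ ‖z + (Real.sqrt 6 : ℂ) / 2‖ := by
      have h1 := norm_add_le (z + (Real.sqrt 6 : ℂ) / 2) (-((Real.sqrt 6 : ℂ) / 2))
      simp only [add_neg_cancel_right, norm_neg] at h1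
      have h2 : ‖(Real.sqrt 6 : ℂ) / 2‖ = Real.sqrt 6 / 2 := by
        rw [norm_div, Complex.norm_real, Real.norm_eq_abs, Complex.norm_two, abs_of_pos s6_pos]
      rw [h2, hz] at h1
      linarith
    rw [norm_div]
    rw [div_le_iff₀ (by linarith : (0:ℝ) < ‖z + (Real.sqrt 6 : ℂ) / 2‖)]
    nlinarith [norm_nonneg (((2 * Real.sqrt 6 / π : ℝ)) : ℂ)]
  calc ‖Gc z‖ ≤ ‖Fc z‖ + ‖pc z‖ :=
        norm_sub_le _ _
    _ ≤ 17 := by linarith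

lemma Gc_hasSeries : HasFPowerSeriesOnBall Gc (cauchyPowerSeries Gc 0 (49/20 : ℝ)) 0
    ((49/20 : ℝ≥0) : ℝ≥0∞) := by
  have hR : ((49/20 : ℝ≥0) : ℝ) = (49/20 : ℝ) := by norm_num
  have h := DifferentiableOn.hasFPowerSeriesOnBall (R := (49/20 : ℝ≥0))
    (by rw [hR]; exact Gc_diffOn) (by norm_num)
  rwa [hR] at h

lemma gn_bound (n : ℕ) :
    ‖(cauchyPowerSeries Gc 0 (49/20 : ℝ)).coeff n‖ ≤ 17 * (20/49)^n := by
  have h1 := norm_cauchyPowerSeries_le Gc 0 (49/20 : ℝ) n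
  have hcont : Continuous (fun θ : ℝ => ‖Gc (circleMap 0 (49/20) θ)‖) := by
    apply Continuous.norm
    apply ContinuousOn.comp_continuous (Gc_diffOn.continuousOn) (continuous_circleMap 0 (49/20))
    intro θ
    rw [Metric.mem_closedBall, Complex.dist_eq, sub_zero]
    rw [show ‖circleMap 0 (49/20) θ‖ = |(49/20 : ℝ)| from norm_circleMap_zero _ _,
      abs_of_pos (by norm_num : (0:ℝ) < 49/20)]
  have h2 : (∫ θ in (0:ℝ)..2*π, ‖Gc (circleMap 0 (49/20) θ)‖) ≤ 2 * π * 17 := by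
    have h3 : (∫ θ in (0:ℝ)..2*π, ‖Gc (circleMap 0 (49/20) θ)‖)
        ≤ ∫ _ in (0:ℝ)..2*π, (17:ℝ) := by
      apply intervalIntegral.integral_mono_on (by positivity : (0:ℝ) ≤ 2*π)
        (hcont.intervalIntegrable _ _) (intervalIntegrable_const)
      intro θ _
      apply Gc_bound
      rw [show ‖circleMap 0 (49/20) θ‖ = |(49/20 : ℝ)| from norm_circleMap_zero _ _,
        abs_of_pos (by norm_num : (0:ℝ) < 49/20)]
    rw [intervalIntegral.integral_const, smul_eq_mul] at h3
    linarith
  have h4 : ‖(cauchyPowerSeries Gc 0 (49/20 : ℝ)).coeff n‖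
      ≤ ‖cauchyPowerSeries Gc 0 (49/20 : ℝ) n‖ := by
    have h5 := ContinuousMultilinearMap.le_opNorm (cauchyPowerSeries Gc 0 (49/20 : ℝ) n) 1
    simp only [Pi.one_apply, norm_one, Finset.prod_const_one, mul_one] at h5
    exact h5
  have hπ := Real.pi_pos
  have hI : 0 ≤ (∫ θ in (0:ℝ)..2*π, ‖Gc (circleMap 0 (49/20) θ)‖) := by
    apply intervalIntegral.integral_nonneg (by positivity)
    intro θ _; exact norm_nonneg _
  have habs : |(49/20:ℝ)|⁻¹ ^ n = (20/49 : ℝ)^n := by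
    rw [abs_of_pos (by norm_num : (0:ℝ) < 49/20)]
    norm_num
  rw [habs] at h1
  calc ‖(cauchyPowerSeries Gc 0 (49/20 : ℝ)).coeff n‖
      ≤ ((2 * π)⁻¹ * ∫ θ in (0:ℝ)..2*π, ‖Gc (circleMap 0 (49/20) θ)‖) * (20/49:ℝ) ^ n :=
        h4.trans h1
    _ ≤ ((2 * π)⁻¹ * (2 * π * 17)) * (20/49:ℝ) ^ n := by
        gcongr
    _ = 17 * (20/49)^n := by
        rw [inv_mul_cancel_left₀ (by positivity : (2*π : ℝ) ≠ 0)]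

lemma Gc_hasSum {y : ℂ} (hy : ‖y‖ < 49/20) :
    HasSum (fun n => (cauchyPowerSeries Gc 0 (49/20 : ℝ)).coeff n * y ^ n) (Gc y) := by
  have hmem : y ∈ EMetric.ball (0:ℂ) ((49/20 : ℝ≥0) : ℝ≥0∞) := by
    show y ∈ Metric.eball (0:ℂ) ((49/20 : ℝ≥0) : ℝ≥0∞)
    rw [Metric.emetric_ball_nnreal, Metric.mem_ball, Complex.dist_eq, sub_zero]
    have : ((49/20 : ℝ≥0) : ℝ) = (49/20 : ℝ) := by norm_num
    rw [this]; exact hy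
  have h := Gc_hasSeries.hasSum hmem
  rw [zero_add] at h
  have e : (fun n => (cauchyPowerSeries Gc 0 (49/20 : ℝ)).coeff n * y ^ n)
      = fun n => (cauchyPowerSeries Gc 0 (49/20 : ℝ) n) fun _ => y := by
    funext n
    rw [FormalMultilinearSeries.apply_eq_pow_smul_coeff, smul_eq_mul, mul_comm]
  rw [e]; exact h

def pn (n : ℕ) : ℝ := 4/π * (-(2/Real.sqrt 6))^n

lemma pc_hasSum {y : ℂ} (hy : ‖y‖ < 6/5) :
    HasSum (fun n => ((pn n : ℝ) : ℂ) * y ^ n) (pc y) := by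
  have hyne : y + (Real.sqrt 6 : ℂ)/2 ≠ 0 := by
    intro h
    have h1 : y = -((Real.sqrt 6 : ℂ)/2) := by linear_combination h
    rw [h1] at hy
    rw [show -((Real.sqrt 6 : ℂ)/2) = ((-(Real.sqrt 6/2) : ℝ) : ℂ) from by push_cast; ring,
      Complex.norm_real, Real.norm_eq_abs] at hy
    rw [abs_of_neg (by nlinarith [s6_pos])] at hy
    nlinarith [s6_gt]
  have hrn : ‖-(2/(Real.sqrt 6 : ℂ)) * y‖ < 1 := by
    rw [norm_mul, norm_neg, norm_div,
      Complex.norm_real, Real.norm_eq_abs, Complex.norm_two, abs_of_pos s6_pos]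
    have h2 : (2 : ℝ)/Real.sqrt 6 ≤ 5/6 := by
      rw [div_le_div_iff₀ s6_pos (by norm_num)]; nlinarith [s6_gt]
    have h3 : (0:ℝ) ≤ 2/Real.sqrt 6 := by positivity
    nlinarith [norm_nonneg y]
  have hgeo := hasSum_geometric_of_norm_lt_one hrn
  have h := hgeo.mul_left (((4/π : ℝ)) : ℂ)
  have hval : ((4/π : ℝ) : ℂ) * (1 - -(2/(Real.sqrt 6 : ℂ)) * y)⁻¹ = pc y := by
    rw [pc, inv_eq_one_div]
    push_cast
    field_simp
    ring
  rw [hval] at h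
  have e : (fun n => ((pn n : ℝ) : ℂ) * y ^ n)
      = fun n => ((4/π : ℝ) : ℂ) * (-(2/(Real.sqrt 6 : ℂ)) * y) ^ n := by
    funext n
    rw [pn]
    push_cast
    rw [mul_pow]
    ring
  rw [e]; exact h

def cn (n : ℕ) : ℂ := ((pn n : ℝ) : ℂ) + (cauchyPowerSeries Gc 0 (49/20 : ℝ)).coeff n

lemma Fc_hasSum {y : ℂ} (hy : ‖y‖ < 6/5) :
    HasSum (fun n => cn n * y ^ n) (Fc y) := by
  have h1 := pc_hasSum hy
  have h2 := Gc_hasSum (lt_trans hy (by norm_num))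
  have h3 := h1.add h2
  have h4 : pc y + Gc y = Fc y := by rw [Gc]; ring
  rw [h4] at h3
  convert h3 using 2 with n
  rw [cn]; ring

lemma cn_bound (n : ℕ) : ‖cn n‖ ≤ 2 * (5/6)^n + 17 * (20/49)^n := by
  rw [cn]
  refine (norm_add_le _ _).trans (add_le_add ?_ (gn_bound n))
  rw [Complex.norm_real, Real.norm_eq_abs, pn, abs_mul, abs_pow]
  have h1 : |(4:ℝ)/π| ≤ 2 := by
    rw [abs_of_pos (by positivity), div_le_iff₀ Real.pi_pos]
    nlinarith [Real.pi_gt_three]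
  have h2 : |(-(2/Real.sqrt 6) : ℝ)| ≤ 5/6 := by
    rw [abs_neg, abs_of_pos (by positivity), div_le_div_iff₀ s6_pos (by norm_num)]
    nlinarith [s6_gt]
  calc |(4:ℝ)/π| * |(-(2/Real.sqrt 6) : ℝ)| ^ n ≤ 2 * (5/6)^n := by
        apply mul_le_mul h1 (pow_le_pow_left₀ (abs_nonneg _) h2 n) (by positivity) (by norm_num)
    _ ≤ 2 * (5/6)^n := le_refl _

lemma Fc_series : HasFPowerSeriesOnBall Fc (FormalMultilinearSeries.ofScalars ℂ cn) 0
    ((6/5 : ℝ≥0) : ℝ≥0∞) := by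
  constructor
  · apply FormalMultilinearSeries.le_radius_of_bound _ 19
    intro n
    rw [FormalMultilinearSeries.ofScalars_norm]
    have h1 : (((6/5 : ℝ≥0) : ℝ)) = (6/5 : ℝ) := by norm_num
    rw [h1]
    have h2 := cn_bound n
    have h3 : (0:ℝ) ≤ (6/5)^n := by positivity
    have h4 : ((2:ℝ) * (5/6)^n + 17 * (20/49)^n) * (6/5)^n ≤ 19 := by
      have e1 : ((5:ℝ)/6)^n * (6/5)^n = 1 := by
        rw [← mul_pow]; norm_num
      have e2 : ((20:ℝ)/49)^n * (6/5)^n = (24/49)^n := by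
        rw [← mul_pow]; norm_num
      have e3 : ((24:ℝ)/49)^n ≤ 1 := pow_le_one₀ (by norm_num) (by norm_num)
      calc ((2:ℝ) * (5/6)^n + 17 * (20/49)^n) * (6/5)^n
          = 2 * ((5/6)^n * (6/5)^n) + 17 * ((20/49)^n * (6/5)^n) := by ring
        _ = 2 + 17 * (24/49:ℝ)^n := by rw [e1, e2]; ring
        _ ≤ 19 := by linarith
    exact le_trans (mul_le_mul_of_nonneg_right h2 h3) h4
  · exact_mod_cast ENNReal.coe_pos.mpr (by norm_num : (0:ℝ≥0) < 6/5)
  · intro y hy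
    rw [zero_add]
    have hy' : ‖y‖ < 6/5 := by
      rw [Metric.emetric_ball_nnreal, Metric.mem_ball, Complex.dist_eq, sub_zero] at hy
      have h2 : ((6/5 : ℝ≥0) : ℝ) = (6/5 : ℝ) := by norm_num
      rwa [h2] at hy
    have h := Fc_hasSum hy'
    have e : (fun n => (FormalMultilinearSeries.ofScalars ℂ cn n) fun _ => y)
        = fun n => cn n * y ^ n := by
      funext n
      rw [FormalMultilinearSeries.ofScalars_apply_eq, smul_eq_mul, mul_comm]
    rw [e]; exact h

lemma iteratedDeriv_Fc (n : ℕ) : iteratedDeriv n Fc 0 = (n.factorial : ℂ) * cn n := by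
  have h := Fc_series.factorial_smul (y := (1:ℂ)) n
  rw [iteratedDeriv_eq_iteratedFDeriv, ← h, FormalMultilinearSeries.ofScalars_apply_eq]
  simp

lemma Fc_ofReal (x : ℝ) : Fc (x : ℂ) = ((phi x : ℝ) : ℂ) := by
  rw [Fc, phi, wz, Complex.ofReal_cot]
  congr 1
  push_cast
  ring

lemma Fc_analytic : AnalyticOnNhd ℂ Fc (Metric.ball (0:ℂ) (6/5)) := by
  apply DifferentiableOn.analyticOnNhd _ Metric.isOpen_ball
  intro z hz
  apply DifferentiableAt.differentiableWithinAt
  rw [Metric.mem_ball, Complex.dist_eq, sub_zero] at hz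
  have hne : z ≠ z₀ := by
    intro h
    rw [h, abs_z0] at hz
    nlinarith [s6_gt]
  exact Fc_diffAt (sin_wz_ne (by linarith : ‖z‖ ≤ 5/2) hne)

lemma iter_Fc_analytic (n : ℕ) : AnalyticOnNhd ℂ (iteratedDeriv n Fc) (Metric.ball (0:ℂ) (6/5)) := by
  induction n with
  | zero => simpa [iteratedDeriv_zero] using Fc_analytic
  | succ n ih =>
    have h := ih.deriv
    have he : iteratedDeriv (n+1) Fc = deriv (iteratedDeriv n Fc) := by
      funext t; rw [iteratedDeriv_succ]
    rwa [he]

lemma iteratedDeriv_phi (n : ℕ) : ∀ x : ℝ, |x| < 6/5 →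
    iteratedDeriv n phi x = (iteratedDeriv n Fc (x:ℂ)).re := by
  induction n with
  | zero =>
    intro x hx
    rw [iteratedDeriv_zero, iteratedDeriv_zero, Fc_ofReal, Complex.ofReal_re]
  | succ n ih =>
    intro x hx
    rw [iteratedDeriv_succ, iteratedDeriv_succ]
    have hopen : IsOpen {t : ℝ | |t| < 6/5} := isOpen_Iio.preimage continuous_abs
    have hev : (fun t : ℝ => iteratedDeriv n phi t)
        =ᶠ[nhds x] (fun t : ℝ => (iteratedDeriv n Fc (t:ℂ)).re) := by
      filter_upwards [hopen.mem_nhds hx] with t ht using ih t ht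
    rw [hev.deriv_eq]
    have hmem : (x : ℂ) ∈ Metric.ball (0:ℂ) (6/5) := by
      rw [Metric.mem_ball, Complex.dist_eq, sub_zero, Complex.norm_real, Real.norm_eq_abs]
      exact hx
    have han : AnalyticAt ℂ (iteratedDeriv n Fc) ((x:ℂ)) := iter_Fc_analytic n _ hmem
    have hd : HasDerivAt (iteratedDeriv n Fc) (deriv (iteratedDeriv n Fc) (x:ℂ)) (x:ℂ) :=
      han.differentiableAt.hasDerivAt
    exact hd.real_of_complex.deriv

lemma iteratedDeriv_phi0 (n : ℕ) : iteratedDeriv n phi 0 = (n.factorial : ℝ) * (cn n).re := by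
  have h := iteratedDeriv_phi n 0 (by norm_num)
  rw [h, show ((0:ℝ) : ℂ) = (0:ℂ) from by norm_num, iteratedDeriv_Fc, Complex.mul_re]
  simp

lemma phi_hasSum {x : ℝ} (hx : |x| < 6/5) :
    HasSum (fun n => (cn n).re * x ^ n) (phi x) := by
  have h := Fc_hasSum (y := (x:ℂ)) (by rwa [Complex.norm_real, Real.norm_eq_abs])
  have h2 := Complex.hasSum_re h
  have h3 : (Fc (x:ℂ)).re = phi x := by rw [Fc_ofReal, Complex.ofReal_re]
  rw [h3] at h2
  convert h2 using 2 with n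
  rw [← Complex.ofReal_pow, Complex.mul_re, Complex.ofReal_re, Complex.ofReal_im]
  ring

lemma sum_even_odd (f : ℕ → ℝ) (K : ℕ) :
    ∑ n ∈ range (2*K), f n = (∑ m ∈ range K, f (2*m)) + ∑ m ∈ range K, f (2*m+1) := by
  induction K with
  | zero => simp
  | succ K ih =>
    rw [Finset.sum_range_succ (fun m => f (2*m)), Finset.sum_range_succ (fun m => f (2*m+1)),
      show 2*(K+1) = (2*K+1)+1 from by ring, Finset.sum_range_succ, Finset.sum_range_succ, ih]
    ring

lemma cn_bound' (n : ℕ) : ‖cn n‖ ≤ 4/π * (2/Real.sqrt 6)^n + 17 * (20/49)^n := by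
  rw [cn]
  refine (norm_add_le _ _).trans (add_le_add ?_ (gn_bound n))
  rw [Complex.norm_real, Real.norm_eq_abs, pn, abs_mul, abs_pow, abs_neg]
  rw [abs_of_pos (by positivity : (0:ℝ) < 4/π), abs_of_pos (by positivity : (0:ℝ) < 2/Real.sqrt 6)]

end Stmt8Proof

set_option maxHeartbeats 1600000 in
theorem stmt8 :
    ∀ N : ℕ, 3 ≤ N →
      ∃ P : Polynomial ℝ,
        (∀ m : ℕ, Even m → P.coeff m = 0) ∧
        ∀ x : ℝ, |x| ≤ 1 / 2 →
          |phi x -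
              (∑ m ∈ Finset.range (N + 2),
                iteratedDeriv (2 * m) phi 0 / (Nat.factorial (2 * m) : ℝ) * x ^ (2 * m)) -
              P.eval x| ≤
            2.3 * (2 / 3 : ℝ) ^ (N + 2) * x ^ (2 * N + 4) := by
  intro N hN
  refine ⟨∑ k ∈ Finset.range (N+2), Polynomial.C ((cn (2*k+1)).re) * Polynomial.X ^ (2*k+1),
    ?_, ?_⟩
  · intro m hm
    rw [Polynomial.finset_sum_coeff]
    apply Finset.sum_eq_zero
    intro k _
    rw [Polynomial.coeff_C_mul, Polynomial.coeff_X_pow]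
    have hne : m ≠ 2*k+1 := by
      intro h; obtain ⟨r, hr⟩ := hm; omega
    rw [if_neg hne, mul_zero]
  · intro x hx
    have hPeval : Polynomial.eval x
        (∑ k ∈ Finset.range (N+2), Polynomial.C ((cn (2*k+1)).re) * Polynomial.X ^ (2*k+1))
        = ∑ k ∈ Finset.range (N+2), (cn (2*k+1)).re * x^(2*k+1) := by
      rw [Polynomial.eval_finset_sum]
      apply Finset.sum_congr rfl
      intro k _
      simp
    have hS : (∑ m ∈ Finset.range (N+2),
          iteratedDeriv (2*m) phi 0 / (Nat.factorial (2*m) : ℝ) * x ^ (2*m))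
        = ∑ m ∈ Finset.range (N+2), (cn (2*m)).re * x^(2*m) := by
      apply Finset.sum_congr rfl
      intro m _
      rw [iteratedDeriv_phi0]
      have hf0 : ((Nat.factorial (2*m) : ℝ)) ≠ 0 := by
        exact_mod_cast Nat.factorial_ne_zero (2*m)
      field_simp
    set K := 2*N+4 with hK
    have hx' : |x| < 6/5 := lt_of_le_of_lt hx (by norm_num)
    have hsum := phi_hasSum hx'
    have hsummable := hsum.summable
    have htail := Summable.sum_add_tsum_nat_add (f := fun n => (cn n).re * x ^ n) K hsummable
    rw [hsum.tsum_eq] at htail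
    have hsplit : (∑ m ∈ Finset.range (N+2), (cn (2*m)).re * x^(2*m))
        + (∑ k ∈ Finset.range (N+2), (cn (2*k+1)).re * x^(2*k+1))
        = ∑ n ∈ Finset.range K, (cn n).re * x^n := by
      rw [hK, show 2*N+4 = 2*(N+2) from by ring]
      exact (sum_even_odd (fun n => (cn n).re * x^n) (N+2)).symm
    rw [hS, hPeval]
    have hexpr : phi x - (∑ m ∈ Finset.range (N+2), (cn (2*m)).re * x^(2*m))
        - (∑ k ∈ Finset.range (N+2), (cn (2*k+1)).re * x^(2*k+1))
        = ∑' j : ℕ, (cn (j+K)).re * x^(j+K) := by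
      have h9 : (∑' j : ℕ, (cn (j+K)).re * x^(j+K))
          = phi x - ∑ n ∈ Finset.range K, (cn n).re * x^n := eq_sub_of_add_eq' htail
      rw [h9, ← hsplit]
      ring
    rw [hexpr]
    -- now bound the tail
    set t := |x| with ht
    have ht0 : 0 ≤ t := abs_nonneg x
    have ht2 : t ≤ 1/2 := hx
    set A : ℝ := 2/Real.sqrt 6 with hA
    have hA0 : 0 ≤ A := by positivity
    have hAt : A * t ≤ 1/Real.sqrt 6 := by
      rw [hA]
      calc 2/Real.sqrt 6 * t ≤ 2/Real.sqrt 6 * (1/2) :=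
            mul_le_mul_of_nonneg_left ht2 (by positivity)
        _ = 1/Real.sqrt 6 := by ring
    have hbt : (20/49 : ℝ) * t ≤ 10/49 := by nlinarith
    set c₁ : ℝ := 4/π * A^K * t^K with hc₁
    set c₂ : ℝ := 17 * (20/49:ℝ)^K * t^K with hc₂
    have hc₁0 : 0 ≤ c₁ := by positivity
    have hc₂0 : 0 ≤ c₂ := by positivity
    have hr₁ : (0:ℝ) ≤ 1/Real.sqrt 6 := by positivity
    have hr₁' : (1:ℝ)/Real.sqrt 6 < 1 := by
      rw [div_lt_one s6_pos]; nlinarith [s6_gt]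
    have hB : HasSum (fun j : ℕ => c₁ * (1/Real.sqrt 6)^j + c₂ * (10/49:ℝ)^j)
        (c₁ * (1 - 1/Real.sqrt 6)⁻¹ + c₂ * (1 - 10/49:ℝ)⁻¹) :=
      ((hasSum_geometric_of_lt_one hr₁ hr₁').mul_left c₁).add
        ((hasSum_geometric_of_lt_one (by norm_num) (by norm_num)).mul_left c₂)
    have hfb : ∀ j : ℕ, ‖(cn (j+K)).re * x^(j+K)‖
        ≤ c₁ * (1/Real.sqrt 6)^j + c₂ * (10/49:ℝ)^j := by
      intro j
      rw [Real.norm_eq_abs, abs_mul, abs_pow, ← ht]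
      calc |(cn (j+K)).re| * t^(j+K)
          ≤ (4/π * A^(j+K) + 17 * (20/49:ℝ)^(j+K)) * t^(j+K) := by
            apply mul_le_mul_of_nonneg_right _ (pow_nonneg ht0 _)
            exact (Complex.abs_re_le_norm _).trans (cn_bound' _)
        _ = (4/π * A^K * t^K) * (A*t)^j + (17 * (20/49:ℝ)^K * t^K) * ((20/49:ℝ)*t)^j := by
            rw [pow_add A, pow_add ((20:ℝ)/49), pow_add t, mul_pow, mul_pow]
            ring
        _ ≤ c₁ * (1/Real.sqrt 6)^j + c₂ * (10/49:ℝ)^j := by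
            rw [hc₁, hc₂]
            apply add_le_add
            · exact mul_le_mul_of_nonneg_left
                (pow_le_pow_left₀ (by positivity) hAt j) (by positivity)
            · exact mul_le_mul_of_nonneg_left
                (pow_le_pow_left₀ (by positivity) hbt j) (by positivity)
    have hbound := tsum_of_norm_bounded hB hfb
    rw [Real.norm_eq_abs] at hbound
    refine hbound.trans ?_
    -- final numeric bound
    have hxK : t^K = x^K := by
      rw [ht, ← abs_pow, abs_of_nonneg (Even.pow_nonneg ⟨N+2, by ring⟩ x)]
    have hAK : A^K = (2/3 : ℝ)^(N+2) := by
      rw [hA, hK, show 2*N+4 = 2*(N+2) from by ring, pow_mul]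
      congr 1
      rw [div_pow, s6_sq]
      norm_num
    have hbK : (20/49:ℝ)^K = ((2/3:ℝ) * (600/2401))^(N+2) := by
      rw [hK, show 2*N+4 = 2*(N+2) from by ring, pow_mul]
      norm_num
    have h49 : ((1:ℝ) - 10/49)⁻¹ = 49/39 := by norm_num
    rw [hc₁, hc₂, hxK, hAK, hbK, h49, mul_pow]
    have hkey : 4/π * (1 - 1/Real.sqrt 6)⁻¹ + 17 * (600/2401:ℝ)^(N+2) * (49/39) ≤ 2.3 := by
      have h5 : (600/2401:ℝ)^(N+2) ≤ (600/2401:ℝ)^5 := by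
        apply pow_le_pow_of_le_one (by norm_num) (by norm_num) (by omega)
      have h6 : ((1449:ℝ)/2449) ≤ 1 - 1/Real.sqrt 6 := by
        have h7 : (1:ℝ)/Real.sqrt 6 ≤ 1000/2449 := by
          rw [div_le_div_iff₀ s6_pos (by norm_num)]
          nlinarith [s6_gt]
        linarith
      have h8 : (1 - 1/Real.sqrt 6)⁻¹ ≤ 2449/1449 := by
        rw [show ((2449:ℝ)/1449) = ((1449:ℝ)/2449)⁻¹ from by norm_num]
        exact inv_anti₀ (by norm_num) h6
      have h9 : (4:ℝ)/π ≤ 1.2733 := by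
        rw [div_le_iff₀ Real.pi_pos]
        nlinarith [Real.pi_gt_d6]
      have h10 : (0:ℝ) ≤ 4/π := by positivity
      have h11 : 4/π * (1 - 1/Real.sqrt 6)⁻¹ ≤ 1.2733 * (2449/1449) := by
        apply mul_le_mul h9 h8 _ (by norm_num)
        positivity
      have h12 : 17 * (600/2401:ℝ)^(N+2) * (49/39) ≤ 17 * (600/2401:ℝ)^5 * (49/39) := by
        nlinarith [h5]
      have h13 : (17:ℝ) * (600/2401:ℝ)^5 * (49/39) ≤ 0.0209 := by norm_num
      nlinarith
    calc 4/π * (2/3:ℝ)^(N+2) * x^K * (1 - 1/Real.sqrt 6)⁻¹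
          + 17 * ((2/3:ℝ)^(N+2) * (600/2401:ℝ)^(N+2)) * x^K * (49/39)
        = (4/π * (1 - 1/Real.sqrt 6)⁻¹ + 17 * (600/2401:ℝ)^(N+2) * (49/39))
            * ((2/3:ℝ)^(N+2) * x^K) := by ring
      _ ≤ 2.3 * ((2/3:ℝ)^(N+2) * x^K) := by
          apply mul_le_mul_of_nonneg_right hkey
          have : (0:ℝ) ≤ x^K := Even.pow_nonneg ⟨N+2, by ring⟩ x
          positivity
      _ = 2.3 * (2/3:ℝ)^(N+2) * x^(2*N+4) := by rw [hK]; ring
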